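/- Let (Λ_Q, f) be a C^{1+Lip} expansive and transitive Markov system. Then the set H has Lebesgue measure zero. -/

import Mathlib

open Set Metric Filter MeasureTheory
open scoped Classical

/-- The word `[ω 0, ω 1, …, ω (n-1)]` read off from the sequence `ω`. -/
def wordOf {p : ℕ} (ω : ℕ → Fin p) (n : ℕ) : List (Fin p) :=
  (List.range n).map ω

/-- The cylinder sets `Δ_{i₁…iₙ} = g_{i₁…i_{n-1}}(I_{iₙ})` of the iterated function
system given by the big interval `I`, the subintervals `Isub i` and the maps `g i`;
by convention `Δ_∅ = I`. -/
def cylOf {p : ℕ} (I : Set ℝ) (Isub : Fin p → Set ℝ) (g : Fin p → ℝ → ℝ) :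
    List (Fin p) → Set ℝ
  | [] => I
  | [i] => Isub i
  | i :: j :: w => g i '' cylOf I Isub g (j :: w)

/-- The sequence `ω` contains the word `w` as a sub-word starting at position `n`. -/
def containsAt {p : ℕ} (ω : ℕ → Fin p) (w : List (Fin p)) (n : ℕ) : Prop :=
  ∀ k : ℕ, (hk : k < w.length) → ω (n + k) = w.get ⟨k, hk⟩

/-- The sequence `ω` belongs to `Σ_Q`, i.e. it contains no word of `Q` as a sub-word. -/
def avoids {p : ℕ} (Q : Finset (List (Fin p))) (ω : ℕ → Fin p) : Prop :=
  ∀ w ∈ Q, ∀ n : ℕ, ¬ containsAt ω w n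

/-- The limit set `Λ_Q = π(Σ_Q)`: points lying, for some `ω ∈ Σ_Q`, in all the
cylinders `Δ_{ω₀…ω_{n-1}}`. -/
def limitSetOf {p : ℕ} (I : Set ℝ) (Isub : Fin p → Set ℝ) (g : Fin p → ℝ → ℝ)
    (Q : Finset (List (Fin p))) : Set ℝ :=
  { x | ∃ ω : ℕ → Fin p, avoids Q ω ∧ ∀ n : ℕ, x ∈ cylOf I Isub g (wordOf ω n) }

/-- `gIter g ω n = g_{i_n … i_1} = g_{ω (n-1)} ∘ ⋯ ∘ g_{ω 0}`. -/
def gIter {p : ℕ} (g : Fin p → ℝ → ℝ) (ω : ℕ → Fin p) : ℕ → ℝ → ℝ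
  | 0 => id
  | n + 1 => g (ω n) ∘ gIter g ω n

/-- The derivative of the composition `gIter g ω n` at `x` (chain rule product). -/
noncomputable def gIterDer {p : ℕ} (g gder : Fin p → ℝ → ℝ) (ω : ℕ → Fin p)
    (n : ℕ) (x : ℝ) : ℝ :=
  ∏ k ∈ Finset.range n, gder (ω k) (gIter g ω k x)

/-- Prepending the finite word `w` to the infinite sequence `ω`. -/
def prependWord {p : ℕ} (w : List (Fin p)) (ω : ℕ → Fin p) : ℕ → Fin p :=
  fun n => if h : n < w.length then w.get ⟨n, h⟩ else ω (n - w.length)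

/-- `l(Σ_Q)`: the minimum, over all finite sets `Q'` of words with `Σ_{Q'} = Σ_Q`,
of the maximal length `l(Q')` of words of `Q'`. -/
noncomputable def minRepLen {p : ℕ} (Q : Finset (List (Fin p))) : ℕ :=
  sInf { n : ℕ | ∃ Q' : Finset (List (Fin p)),
    (∀ ω : ℕ → Fin p, avoids Q' ω ↔ avoids Q ω) ∧ Q'.sup List.length = n }

/-- A `C^{1+Lip}` expansive and transitive Markov system `(Λ_Q, f)`. -/
structure ExpansiveMarkovSystem (p : ℕ) where
  /-- the alphabet is nonempty -/
  hp : 0 < p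
  /-- the ambient closed interval `I` -/
  I : Set ℝ
  hI : ∃ a b : ℝ, a < b ∧ I = Set.Icc a b
  /-- the pairwise disjoint closed subintervals `I₁, …, I_p` -/
  Isub : Fin p → Set ℝ
  hIsub : ∀ i, ∃ a b : ℝ, a < b ∧ Isub i = Set.Icc a b
  hsubI : ∀ i, Isub i ⊆ I
  hdisj : ∀ i j, i ≠ j → Disjoint (Isub i) (Isub j)
  /-- the contractions `g i`, defined on `⋃ j, Isub j` -/
  g : Fin p → ℝ → ℝ
  /-- the derivative of `g i` on `⋃ j, Isub j` -/
  gder : Fin p → ℝ → ℝ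
  hg_inj : ∀ i, Set.InjOn (g i) (⋃ j, Isub j)
  hg_range : ∀ i, g i '' (⋃ j, Isub j) ⊆ interior (Isub i)
  hg_deriv : ∀ i, ∀ x ∈ ⋃ j, Isub j,
    HasDerivWithinAt (g i) (gder i x) (⋃ j, Isub j) x
  hgder_ne : ∀ i, ∀ x ∈ ⋃ j, Isub j, gder i x ≠ 0
  hgder_cont : ∀ i, ContinuousOn (gder i) (⋃ j, Isub j)
  /-- `log |g i'|` is Lipschitz on the domain -/
  hgder_lip : ∀ i, ∃ θ : ℝ, ∀ x ∈ ⋃ j, Isub j, ∀ y ∈ ⋃ j, Isub j,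
    abs (Real.log (abs (gder i x)) - Real.log (abs (gder i y))) ≤ θ * |x - y|
  /-- the expanding map `f`, with `f (g i x) = x` -/
  f : ℝ → ℝ
  /-- the derivative `f'` of `f` on the ranges of the `g i` -/
  fder : ℝ → ℝ
  hf : ∀ i, ∀ x ∈ ⋃ j, Isub j, f (g i x) = x
  hfder : ∀ i, ∀ x ∈ ⋃ j, Isub j, fder (g i x) = (gder i x)⁻¹
  /-- the generator (expansivity) condition: `d_n → 0` -/
  hgen : ∀ ε : ℝ, 0 < ε → ∃ N : ℕ, ∀ w : List (Fin p), N ≤ w.length →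
    Metric.diam (cylOf I Isub g w) < ε
  /-- the finite set of forbidden words -/
  Q : Finset (List (Fin p))
  /-- `Σ_Q` is completely invariant: `σ(Σ_Q) = Σ_Q` -/
  hQinv : ∀ ω : ℕ → Fin p, avoids Q ω →
    ∃ ω' : ℕ → Fin p, avoids Q ω' ∧ ∀ n : ℕ, ω' (n + 1) = ω n
  /-- `f|Λ_Q` is topologically transitive -/
  htrans : ∀ U V : Set ℝ, IsOpen U → IsOpen V →
    (U ∩ limitSetOf I Isub g Q).Nonempty → (V ∩ limitSetOf I Isub g Q).Nonempty →
    ∃ n : ℕ, ∃ x ∈ U ∩ limitSetOf I Isub g Q, f^[n] x ∈ V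

namespace ExpansiveMarkovSystem

variable {p : ℕ} (S : ExpansiveMarkovSystem p)

/-- The common domain `⋃ j, I_j` of the maps `g i`. -/
def dom : Set ℝ := ⋃ j, S.Isub j

/-- The cylinder `Δ_w` associated to the word `w`. -/
def cyl (w : List (Fin p)) : Set ℝ := cylOf S.I S.Isub S.g w

/-- The limit set `Λ_Q`. -/
def limitSet : Set ℝ := limitSetOf S.I S.Isub S.g S.Q

/-- The domain of `f`, i.e. the union of the ranges of the `g i`. -/
def domF : Set ℝ := ⋃ i, S.g i '' S.dom

/-- The derivative `(fⁿ)'(x)` of the `n`-th iterate of `f` at `x`. -/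
noncomputable def derIter (n : ℕ) (x : ℝ) : ℝ :=
  ∏ k ∈ Finset.range n, S.fder (S.f^[k] x)

/-- The Lyapunov exponent `χ(x) = limsup (1/n) log |(fⁿ)'(x)|`. -/
noncomputable def lyap (x : ℝ) : ℝ :=
  Filter.limsup (fun n : ℕ => Real.log |S.derIter n x| / n) Filter.atTop

/-- The set `H` of points of `Λ_Q` with infinitely many hyperbolic instants. -/
def hypSet : Set ℝ :=
  { x ∈ S.limitSet | ∃ c₁ : ℝ, 0 < c₁ ∧ ∃ c₂ : ℝ, 0 < c₂ ∧
      ∃ n : ℕ → ℕ, StrictMono n ∧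
        ∃ r : ℕ → ℝ, (∀ k, 0 < r k) ∧ Antitone r ∧
          Filter.Tendsto r Filter.atTop (nhds 0) ∧
          ∀ k : ℕ,
            (∀ y ∈ Metric.ball x (r k), ∀ j < n k, S.f^[j] y ∈ S.domF) ∧
            c₁ < Metric.diam (S.f^[n k] '' Metric.ball x (r k)) ∧
            (∀ y ∈ Metric.ball x (r k), ∀ z ∈ Metric.ball x (r k),
              |S.derIter (n k) y| / |S.derIter (n k) z| < c₂) }

/-- `x` is a parabolic periodic point: `f^m(x) = x` and `|(f^m)'(x)| = 1`. -/
def IsParabolicPeriodic (x : ℝ) : Prop :=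
  x ∈ S.limitSet ∧ ∃ m : ℕ, 1 ≤ m ∧ S.f^[m] x = x ∧ |S.derIter m x| = 1

/-- `ν` is a `t`-conformal (Borel probability) measure supported on `Λ_Q`. -/
def IsConformal (ν : Measure ℝ) (t : ℝ) : Prop :=
  IsProbabilityMeasure ν ∧ ν S.limitSetᶜ = 0 ∧
    ∀ A : Set ℝ, MeasurableSet A → A ⊆ S.limitSet → Set.InjOn S.f A →
      ν (S.f '' A) = ∫⁻ x in A, ENNReal.ofReal (|S.fder x| ^ t) ∂ν

/-- `t_c = inf {t ≥ 0 : a t-conformal measure on Λ_Q exists}`. -/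
noncomputable def tc : ℝ :=
  sInf { t : ℝ | 0 ≤ t ∧ ∃ ν : Measure ℝ, S.IsConformal ν t }

/-- `n` is a hyperbolic time for `x` with exponent `α`. -/
def IsHypTime (α : ℝ) (x : ℝ) (n : ℕ) : Prop :=
  ∀ k : ℕ, 1 ≤ k → k ≤ n → Real.exp (k * α) ≤ |S.derIter k (S.f^[n - k] x)|

/-- `H_HT(α)`: the points of `Λ_Q` with infinitely many hyperbolic times with exponent `α`. -/
def HHT (α : ℝ) : Set ℝ :=
  { x ∈ S.limitSet | ∀ N : ℕ, ∃ n : ℕ, N ≤ n ∧ S.IsHypTime α x n }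

end ExpansiveMarkovSystem

/-!
Lebesgue density argument. For `x ∈ H`, with constants `c₁, c₂`, times `n_k` and radii `r_k`,
the branch `ψ` of `f^{-n_k}` maps `T = f^{n_k}(B(x, r_k))`, an interval of length `> c₁`, back
onto the ball with distortion `< c₂`. When `p ≥ 2`, every interval of length `> c₁` contains a
gap of `Λ_Q` of length `≥ ε(c₁)`: either its middle part misses `Λ_Q`, or it contains a short
cylinder, which has a gap between two of its subcylinders. By bounded distortion `ψ` carries
this gap to a gap filling a fraction `≥ ε / (4 c₂ |I|)` of the ball. So no point of `H` is a
density point of `Λ_Q ⊇ H`, and `H` is null by the Lebesgue–Besicovitch density theorem.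
When `p = 1`, `Λ_Q` is a single point.
-/

open Topology
open scoped Function

theorem IsPreconnected.subset_of_subset_iUnion_of_isClosed {X ι : Type*} [TopologicalSpace X]
    [Finite ι] {C : ι → Set X} (hC : ∀ i, IsClosed (C i)) (hd : Pairwise (Disjoint on C))
    {s : Set X} (hs : IsPreconnected s) (hsC : s ⊆ ⋃ i, C i) {i : ι} (hi : (s ∩ C i).Nonempty) :
    s ⊆ C i := by
  set R := ⋃ j : {j // j ≠ i}, C j
  have hcover : s ⊆ C i ∪ R := by
    intro x hx
    obtain ⟨j, hj⟩ := mem_iUnion.1 (hsC hx)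
    by_cases h : j = i
    · exact Or.inl (h ▸ hj)
    · exact Or.inr (mem_iUnion.2 ⟨⟨j, h⟩, hj⟩)
  have hdisj : Disjoint (C i) R := disjoint_iUnion_right.2 fun j => hd j.2.symm
  refine ((isPreconnected_iff_subset_of_disjoint_closed.1 hs) _ _ (hC i)
    (isClosed_iUnion_of_finite fun j : {j // j ≠ i} => hC j) hcover
    (by rw [hdisj.inter_eq, inter_empty])).resolve_right ?_
  obtain ⟨x, hxs, hxi⟩ := hi
  exact fun hsR => hdisj.notMem_of_mem_left hxi (hsR hxs)

theorem IsCompact.continuousOn_image_of_leftInvOn {X Y : Type*} [TopologicalSpace X]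
    [TopologicalSpace Y] [T2Space Y] {g : X → Y} {f : Y → X} {K : Set X} (hK : IsCompact K)
    (hg : ContinuousOn g K) (hfg : LeftInvOn f g K) : ContinuousOn f (g '' K) := by
  refine continuousOn_iff_isClosed.2 fun t ht => ⟨g '' (t ∩ K), ?_, ?_⟩
  · exact ((hK.inter_left ht).image_of_continuousOn (hg.mono inter_subset_right)).isClosed
  · rw [inter_eq_self_of_subset_left (image_mono inter_subset_right), hfg.image_inter']

theorem ContinuousOn.isOpen_image_of_injOn {f : ℝ → ℝ} {U : Set ℝ} (hU : IsOpen U)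
    (hf : ContinuousOn f U) (hinj : InjOn f U) : IsOpen (f '' U) := by
  refine isOpen_iff_mem_nhds.2 ?_
  rintro _ ⟨y, hy, rfl⟩
  obtain ⟨r, hr, hball⟩ := Metric.isOpen_iff.1 hU y hy
  have hIcc : Icc (y - r / 2) (y + r / 2) ⊆ U := fun z hz =>
    hball (by rw [Real.ball_eq_Ioo]; constructor <;> linarith [hz.1, hz.2])
  have hlt : y - r / 2 < y + r / 2 := by linarith
  have hy' : y ∈ Ioo (y - r / 2) (y + r / 2) := ⟨by linarith, by linarith⟩
  refine mem_of_superset ?_ (image_mono (Ioo_subset_Icc_self.trans hIcc))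
  rcases (hf.mono hIcc).strictMonoOn_of_injOn_Icc' hlt.le (hinj.mono hIcc) with h | h
  · rw [(hf.mono hIcc).image_Ioo_of_strictMonoOn hlt.le h]
    exact Ioo_mem_nhds (h ⟨le_rfl, hlt.le⟩ ⟨hy'.1.le, hy'.2.le⟩ hy'.1)
      (h ⟨hy'.1.le, hy'.2.le⟩ ⟨hlt.le, le_rfl⟩ hy'.2)
  · rw [(hf.mono hIcc).image_Ioo_of_strictAntiOn hlt.le h]
    exact Ioo_mem_nhds (h ⟨hy'.1.le, hy'.2.le⟩ ⟨hlt.le, le_rfl⟩ hy'.2)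
      (h ⟨le_rfl, hlt.le⟩ ⟨hy'.1.le, hy'.2.le⟩ hy'.1)

theorem IsPreconnected.exists_Icc_subset_of_lt_diam {T : Set ℝ} (hT : IsPreconnected T) {c : ℝ}
    (hc : 0 ≤ c) (h : c < diam T) : ∃ a b, c < b - a ∧ Icc a b ⊆ T := by
  have hbdd : Bornology.IsBounded T := by
    by_contra hunb
    rw [diam_eq_zero_of_unbounded hunb] at h
    linarith
  obtain ⟨x, hx, y, hy, hxy⟩ : ∃ x ∈ T, ∃ y ∈ T, c < dist x y := by
    by_contra! hle
    exact h.not_ge (diam_le_of_forall_dist_le hc hle)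
  refine ⟨min x y, max x y, ?_, hT.ordConnected.uIcc_subset hx hy⟩
  rwa [max_sub_min_eq_abs', ← Real.dist_eq]

/-- The factor `2` comes from applying the mean value theorem on the middle half of `(a, b)`. -/
theorem exists_Ioo_subset_image_of_bounded_distortion {ψ ψ' : ℝ → ℝ} {T : Set ℝ}
    (hT : T.OrdConnected) (hψ : ∀ t ∈ T, HasDerivAt ψ (ψ' t) t) {K L : ℝ}
    (hK : ∀ s ∈ T, ∀ t ∈ T, |ψ' s| ≤ K * |ψ' t|) (hL : ∀ s ∈ T, ∀ t ∈ T, |s - t| ≤ L)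
    {u v a b : ℝ} (hu : u ∈ T) (hv : v ∈ T) (hab : a < b) (habT : Ioo a b ⊆ T) :
    ∃ c d, |ψ v - ψ u| * (b - a) ≤ 2 * K * L * (d - c) ∧ Ioo c d ⊆ ψ '' Ioo a b := by
  set a' := a + (b - a) / 4 with ha'
  set b' := b - (b - a) / 4 with hb'
  have hab' : a' < b' := by linarith
  have hIcc : Icc a' b' ⊆ Ioo a b := fun t ht => ⟨by linarith [ht.1], by linarith [ht.2]⟩
  obtain ⟨ξ, hξ, hslope⟩ := exists_hasDerivAt_eq_slope ψ ψ' hab'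
    (fun t ht => (hψ t (habT (hIcc ht))).continuousAt.continuousWithinAt)
    fun t ht => hψ t (habT (hIcc (Ioo_subset_Icc_self ht)))
  have hξT : ξ ∈ T := habT (hIcc (Ioo_subset_Icc_self hξ))
  have hspread : |ψ v - ψ u| ≤ K * |ψ' ξ| * L :=
    calc |ψ v - ψ u| ≤ K * |ψ' ξ| * |v - u| :=
          hT.convex.norm_image_sub_le_of_norm_hasDerivWithin_le
            (fun t ht => (hψ t ht).hasDerivWithinAt) (fun t ht => hK t ht ξ hξT) hu hv
      _ ≤ K * |ψ' ξ| * L :=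
          mul_le_mul_of_nonneg_left (hL v hv u hu) ((abs_nonneg _).trans (hK ξ hξT ξ hξT))
  have hstretch : ψ b' - ψ a' = ψ' ξ * (b' - a') := by
    rw [hslope, div_mul_cancel₀ _ (sub_ne_zero.2 hab'.ne')]
  refine ⟨min (ψ a') (ψ b'), max (ψ a') (ψ b'), ?_, ?_⟩
  · rw [max_sub_min_eq_abs, hstretch, abs_mul, abs_of_pos (sub_pos.2 hab'),
      show b' - a' = (b - a) / 2 by linarith]
    linarith [mul_le_mul_of_nonneg_right hspread (sub_pos.2 hab).le]
  · have hcont : ContinuousOn ψ (Ioo a b) :=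
      fun t ht => (hψ t (habT ht)).continuousAt.continuousWithinAt
    exact Ioo_subset_Icc_self.trans ((isPreconnected_Ioo.image ψ hcont).ordConnected.uIcc_subset
      (mem_image_of_mem ψ (hIcc ⟨le_rfl, hab'.le⟩)) (mem_image_of_mem ψ (hIcc ⟨hab'.le, le_rfl⟩)))

theorem volume_inter_closedBall_div_le_of_disjoint_Ioo {s : Set ℝ} {x ρ c d η : ℝ}
    (hρ : 0 < ρ) (hη : 0 ≤ η) (hcd : Ioo c d ⊆ closedBall x ρ) (hs : Disjoint (Ioo c d) s)
    (hlen : η * (2 * ρ) ≤ d - c) :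
    volume (s ∩ closedBall x ρ) / volume (closedBall x ρ) ≤ ENNReal.ofReal (1 - η) := by
  have hsub : s ∩ closedBall x ρ ⊆ closedBall x ρ \ Ioo c d :=
    fun y hy => ⟨hy.2, fun h => hs.notMem_of_mem_left h hy.1⟩
  calc volume (s ∩ closedBall x ρ) / volume (closedBall x ρ)
      ≤ volume (closedBall x ρ \ Ioo c d) / volume (closedBall x ρ) := by gcongr
    _ ≤ (ENNReal.ofReal (2 * ρ) - ENNReal.ofReal (η * (2 * ρ))) / ENNReal.ofReal (2 * ρ) := by
        rw [measure_sdiff hcd measurableSet_Ioo.nullMeasurableSet measure_Ioo_lt_top.ne,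
          Real.volume_closedBall, Real.volume_Ioo]
        gcongr
    _ = ENNReal.ofReal (1 - η) := by
        rw [← ENNReal.ofReal_sub _ (by positivity), ← ENNReal.ofReal_div_of_pos (by positivity)]
        congr 1
        field_simp

theorem measure_eq_zero_of_frequently_density_le {α : Type*} [MetricSpace α] [MeasurableSpace α]
    [BorelSpace α] [SecondCountableTopology α] [HasBesicovitchCovering α] (μ : Measure α)
    [IsLocallyFiniteMeasure μ] {s A : Set α} (hA : A ⊆ s)
    (h : ∀ x ∈ A, ∃ C < 1, ∃ᶠ r in 𝓝[>] 0, μ (s ∩ closedBall x r) / μ (closedBall x r) ≤ C) :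
    μ A = 0 := by
  rw [← Measure.restrict_eq_self μ hA]
  refine measure_mono_null (fun x hx => ?_)
    (ae_iff.1 (Besicovitch.ae_tendsto_measure_inter_div μ s))
  obtain ⟨C, hC, hfreq⟩ := h x hx
  exact fun hT => hfreq ((hT.eventually (lt_mem_nhds hC)).mono fun r hr => hr.not_ge)

lemma wordOf_length {p : ℕ} (ω : ℕ → Fin p) (n : ℕ) : (wordOf ω n).length = n := by
  simp [wordOf]

lemma wordOf_succ {p : ℕ} (ω : ℕ → Fin p) (n : ℕ) :
    wordOf ω (n + 1) = wordOf ω n ++ [ω n] := by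
  simp [wordOf, List.range_succ]

lemma wordOf_succ_eq_cons {p : ℕ} (ω : ℕ → Fin p) (n : ℕ) :
    wordOf ω (n + 1) = ω 0 :: wordOf (fun k => ω (k + 1)) n := by
  simp [wordOf, List.range_succ_eq_map, List.map_map]

namespace ExpansiveMarkovSystem

variable {p : ℕ} (S : ExpansiveMarkovSystem p)

lemma isCompact_I : IsCompact S.I := by
  obtain ⟨a, b, -, h⟩ := S.hI
  exact h ▸ isCompact_Icc

lemma isCompact_Isub (i : Fin p) : IsCompact (S.Isub i) := by
  obtain ⟨a, b, -, h⟩ := S.hIsub i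
  exact h ▸ isCompact_Icc

lemma Isub_subset_dom (i : Fin p) : S.Isub i ⊆ S.dom := subset_iUnion _ i

lemma dom_subset_I : S.dom ⊆ S.I := iUnion_subset S.hsubI

lemma isCompact_dom : IsCompact S.dom := isCompact_iUnion S.isCompact_Isub

lemma continuousOn_g (i : Fin p) : ContinuousOn (S.g i) S.dom :=
  fun x hx => (S.hg_deriv i x hx).continuousWithinAt

lemma g_image_subset_Isub (i : Fin p) : S.g i '' S.dom ⊆ S.Isub i :=
  (S.hg_range i).trans interior_subset

lemma g_image_subset_interior_dom (i : Fin p) : S.g i '' S.dom ⊆ interior S.dom :=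
  (S.hg_range i).trans (interior_mono (S.Isub_subset_dom i))

lemma continuousOn_f (i : Fin p) : ContinuousOn S.f (S.g i '' S.dom) :=
  S.isCompact_dom.continuousOn_image_of_leftInvOn (S.continuousOn_g i) fun x hx => S.hf i x hx

lemma exists_subset_g_image_dom {B : Set ℝ} (hB : IsPreconnected B) (hBf : B ⊆ S.domF) :
    ∃ i, B ⊆ S.g i '' S.dom := by
  rcases B.eq_empty_or_nonempty with rfl | ⟨x, hx⟩
  · exact ⟨⟨0, S.hp⟩, empty_subset _⟩
  obtain ⟨i, hi⟩ := mem_iUnion.1 (hBf hx)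
  refine ⟨i, hB.subset_of_subset_iUnion_of_isClosed
    (fun j => ((S.isCompact_dom.image_of_continuousOn (S.continuousOn_g j))).isClosed)
    (fun j k hjk => ?_) hBf ⟨x, hx, hi⟩⟩
  exact (S.hdisj j k hjk).mono (S.g_image_subset_Isub j) (S.g_image_subset_Isub k)

lemma cyl_cons (i : Fin p) {w : List (Fin p)} (hw : w ≠ []) :
    S.cyl (i :: w) = S.g i '' S.cyl w := by
  obtain ⟨j, w, rfl⟩ := List.exists_cons_of_ne_nil hw
  rfl

lemma cyl_cons_subset_Isub (i : Fin p) (w : List (Fin p)) : S.cyl (i :: w) ⊆ S.Isub i := by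
  induction w generalizing i with
  | nil => exact subset_rfl
  | cons j w ih =>
    rw [S.cyl_cons i (List.cons_ne_nil j w)]
    exact (image_mono ((ih j).trans (S.Isub_subset_dom j))).trans (S.g_image_subset_Isub i)

lemma cyl_subset_dom {w : List (Fin p)} (hw : w ≠ []) : S.cyl w ⊆ S.dom := by
  obtain ⟨i, w, rfl⟩ := List.exists_cons_of_ne_nil hw
  exact (S.cyl_cons_subset_Isub i w).trans (S.Isub_subset_dom i)

lemma cyl_subset_I (w : List (Fin p)) : S.cyl w ⊆ S.I := by
  rcases eq_or_ne w [] with rfl | hw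
  · exact subset_rfl
  · exact (S.cyl_subset_dom hw).trans S.dom_subset_I

lemma isCompact_cyl (w : List (Fin p)) : IsCompact (S.cyl w) := by
  induction w using cylOf.induct with
  | case1 => exact S.isCompact_I
  | case2 i => exact S.isCompact_Isub i
  | case3 i j w ih =>
    exact ih.image_of_continuousOn
      ((S.continuousOn_g i).mono (S.cyl_subset_dom (List.cons_ne_nil j w)))

lemma isPreconnected_cyl (w : List (Fin p)) : IsPreconnected (S.cyl w) := by
  induction w using cylOf.induct with
  | case1 =>
    obtain ⟨a, b, -, h⟩ := S.hI
    exact (h ▸ isPreconnected_Icc : IsPreconnected S.I)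
  | case2 i =>
    obtain ⟨a, b, -, h⟩ := S.hIsub i
    exact (h ▸ isPreconnected_Icc : IsPreconnected (S.Isub i))
  | case3 i j w ih =>
    exact ih.image _ ((S.continuousOn_g i).mono (S.cyl_subset_dom (List.cons_ne_nil j w)))

lemma cyl_nonempty (w : List (Fin p)) : (S.cyl w).Nonempty := by
  induction w using cylOf.induct with
  | case1 =>
    obtain ⟨a, b, hab, h⟩ := S.hI
    exact (h ▸ nonempty_Icc.2 hab.le : S.I.Nonempty)
  | case2 i =>
    obtain ⟨a, b, hab, h⟩ := S.hIsub i
    exact (h ▸ nonempty_Icc.2 hab.le : (S.Isub i).Nonempty)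
  | case3 i j w ih => exact ih.image _

lemma cyl_append_subset {w : List (Fin p)} (hw : w ≠ []) (i : Fin p) :
    S.cyl (w ++ [i]) ⊆ S.cyl w := by
  induction w with
  | nil => exact absurd rfl hw
  | cons a w ih =>
    rcases eq_or_ne w [] with rfl | hw'
    · exact S.cyl_cons_subset_Isub a [i]
    rw [List.cons_append, S.cyl_cons a (by simp), S.cyl_cons a hw']
    exact image_mono (ih hw')

lemma disjoint_cyl {w v : List (Fin p)} (hw : w ≠ []) (hlen : w.length = v.length)
    (hne : w ≠ v) : Disjoint (S.cyl w) (S.cyl v) := by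
  induction w generalizing v with
  | nil => exact absurd rfl hw
  | cons a w ih =>
    obtain ⟨b, v, rfl⟩ := List.exists_cons_of_length_eq_add_one hlen.symm
    by_cases hab : a = b
    · subst hab
      have hlen' : w.length = v.length := by simpa using hlen
      have hw' : w ≠ [] := by
        rintro rfl
        exact hne (by rw [List.length_eq_zero_iff.1 hlen'.symm])
      have hv' : v ≠ [] := by
        rintro rfl
        exact hw' (List.length_eq_zero_iff.1 hlen')
      rw [S.cyl_cons a hw', S.cyl_cons a hv']
      exact (ih hw' hlen' (by simpa using hne)).image (S.hg_inj a)
        (S.cyl_subset_dom hw') (S.cyl_subset_dom hv')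
    · exact (S.hdisj a b hab).mono (S.cyl_cons_subset_Isub a w) (S.cyl_cons_subset_Isub b v)

lemma f_mem_limitSet {x : ℝ} (hx : x ∈ S.limitSet) : S.f x ∈ S.limitSet := by
  obtain ⟨ω, hω, hmem⟩ := hx
  refine ⟨fun k => ω (k + 1), fun w hw n hc => hω w hw (n + 1) fun k hk => ?_, ?_⟩
  · rw [← hc k hk, Nat.add_right_comm]
  · have hshift : ∀ n, S.f x ∈ S.cyl (wordOf (fun k => ω (k + 1)) (n + 1)) := by
      intro n
      have hne : wordOf (fun k => ω (k + 1)) (n + 1) ≠ [] := by simp [wordOf]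
      obtain ⟨z, hz, rfl⟩ : x ∈ S.g (ω 0) '' S.cyl (wordOf (fun k => ω (k + 1)) (n + 1)) := by
        rw [← S.cyl_cons _ hne, ← wordOf_succ_eq_cons]
        exact hmem (n + 2)
      rwa [S.hf _ z (S.cyl_subset_dom hne hz)]
    rintro (_ | n)
    · exact S.cyl_subset_I _ (hshift 0)
    · exact hshift n

lemma iterate_mem_limitSet {x : ℝ} (hx : x ∈ S.limitSet) (n : ℕ) : S.f^[n] x ∈ S.limitSet := by
  induction n with
  | zero => exact hx
  | succ n ih => exact Function.iterate_succ_apply' S.f n x ▸ S.f_mem_limitSet ih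

lemma exists_mem_cyl_append {x : ℝ} (hx : x ∈ S.limitSet) {w : List (Fin p)} (hw : w ≠ [])
    (hxw : x ∈ S.cyl w) : ∃ i, x ∈ S.cyl (w ++ [i]) := by
  obtain ⟨ω, -, hmem⟩ := hx
  have hword : wordOf ω w.length = w := by
    by_contra hne
    have hne' : wordOf ω w.length ≠ [] := by
      rw [ne_eq, ← List.length_eq_zero_iff, wordOf_length, List.length_eq_zero_iff]
      exact hw
    exact (S.disjoint_cyl hne' (wordOf_length ω _) hne).notMem_of_mem_left (hmem _) hxw
  have hnext := hmem (w.length + 1)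
  rw [wordOf_succ, hword] at hnext
  exact ⟨ω w.length, hnext⟩

/-- Between two distinct subcylinders of `Δ_w` there is an interval missing all of them, and
hence missing `Λ_Q`. -/
lemma exists_Ioo_subset_cyl_disjoint_limitSet (hp : 2 ≤ p) {w : List (Fin p)} (hw : w ≠ []) :
    ∃ a b, a < b ∧ Ioo a b ⊆ S.cyl w ∧ Disjoint (Ioo a b) S.limitSet := by
  set C : Fin p → Set ℝ := fun i => S.cyl (w ++ [i])
  have hC : ∀ i, IsClosed (C i) := fun i => (S.isCompact_cyl _).isClosed
  have hCd : Pairwise (Disjoint on C) := fun i j hij =>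
    S.disjoint_cyl (by simp) (by simp) (by simpa using hij)
  have hUc : IsClosed (⋃ i, C i) := isClosed_iUnion_of_finite hC
  obtain ⟨i₀, i₁, hi⟩ : ∃ i₀ i₁ : Fin p, i₀ ≠ i₁ := ⟨⟨0, by omega⟩, ⟨1, by omega⟩, by simp⟩
  obtain ⟨u, hu⟩ := S.cyl_nonempty (w ++ [i₀])
  obtain ⟨v, hv⟩ := S.cyl_nonempty (w ++ [i₁])
  wlog huv : u < v generalizing i₀ i₁ u v with H
  · refine H i₁ i₀ hi.symm v hv u hu ((not_lt.1 huv).lt_of_ne fun h => ?_)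
    exact (hCd hi).notMem_of_mem_left hu (h ▸ hv)
  have hIcc : Icc u v ⊆ S.cyl w :=
    (S.isPreconnected_cyl w).ordConnected.out (S.cyl_append_subset hw _ hu)
      (S.cyl_append_subset hw _ hv)
  obtain ⟨q, hq, hqU⟩ : ∃ q ∈ Icc u v, q ∉ ⋃ i, C i := by
    refine not_subset.1 fun hsub => (hCd hi).notMem_of_mem_right hv ?_
    exact isPreconnected_Icc.subset_of_subset_iUnion_of_isClosed hC hCd hsub
      ⟨u, left_mem_Icc.2 huv.le, hu⟩ (right_mem_Icc.2 huv.le)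
  have hqIoo : q ∈ Ioo u v := by
    refine ⟨hq.1.lt_of_ne ?_, hq.2.lt_of_ne ?_⟩ <;> rintro rfl
    exacts [hqU (mem_iUnion_of_mem _ hu), hqU (mem_iUnion_of_mem _ hv)]
  obtain ⟨a, b, hab, hsub⟩ := (isOpen_Ioo.sdiff hUc).exists_Ioo_subset ⟨q, hqIoo, hqU⟩
  refine ⟨a, b, hab, fun t ht => hIcc (Ioo_subset_Icc_self (hsub ht).1), ?_⟩
  refine disjoint_left.2 fun t ht htΛ => (hsub ht).2 ?_
  obtain ⟨i, hti⟩ := S.exists_mem_cyl_append htΛ hw (hIcc (Ioo_subset_Icc_self (hsub ht).1))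
  exact mem_iUnion_of_mem i hti

lemma exists_uniform_Ioo_subset_cyl (hp : 2 ≤ p) {n : ℕ} (hn : n ≠ 0) :
    ∃ ε > 0, ∀ w : List (Fin p), w.length = n →
      ∃ a b, ε ≤ b - a ∧ Ioo a b ⊆ S.cyl w ∧ Disjoint (Ioo a b) S.limitSet := by
  have hev : ∀ᶠ ε in 𝓝[>] (0 : ℝ), ∀ w ∈ {w : List (Fin p) | w.length = n},
      ∃ a b, ε ≤ b - a ∧ Ioo a b ⊆ S.cyl w ∧ Disjoint (Ioo a b) S.limitSet := by
    refine (eventually_all_finite (List.finite_length_eq _ n)).2 fun w hw => ?_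
    obtain ⟨a, b, hab, hgap⟩ := S.exists_Ioo_subset_cyl_disjoint_limitSet hp (w := w)
      (by rintro rfl; exact hn hw.symm)
    exact ((eventually_le_nhds (sub_pos.2 hab)).filter_mono nhdsWithin_le_nhds).mono
      fun ε hε => ⟨a, b, hε, hgap⟩
  obtain ⟨ε, hε, hε0⟩ := (hev.and self_mem_nhdsWithin).exists
  exact ⟨ε, hε0, hε⟩

lemma exists_uniform_Ioo_disjoint_limitSet (hp : 2 ≤ p) {c : ℝ} (hc : 0 < c) :
    ∃ ε > 0, ∀ a₀ b₀, c < b₀ - a₀ →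
      ∃ a b, ε ≤ b - a ∧ Ioo a b ⊆ Icc a₀ b₀ ∧ Disjoint (Ioo a b) S.limitSet := by
  obtain ⟨N, hN⟩ := S.hgen (c / 4) (by positivity)
  obtain ⟨ε, hε, hgap⟩ := S.exists_uniform_Ioo_subset_cyl hp N.succ_ne_zero
  refine ⟨min (c / 2) ε, by positivity, fun a₀ b₀ hab₀ => ?_⟩
  set m := (a₀ + b₀) / 2 with hm
  by_cases hW : Disjoint (Ioo (m - c / 4) (m + c / 4)) S.limitSet
  · refine ⟨m - c / 4, m + c / 4, (min_le_left _ _).trans (by linarith), fun t ht => ?_, hW⟩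
    exact ⟨by linarith [ht.1], by linarith [ht.2]⟩
  obtain ⟨l, hlW, ω, -, hω⟩ := not_disjoint_iff.1 hW
  obtain ⟨a, b, hεab, habw, hΛ⟩ := hgap (wordOf ω (N + 1)) (wordOf_length ω _)
  have hwIcc : S.cyl (wordOf ω (N + 1)) ⊆ Icc a₀ b₀ := by
    intro z hz
    have hzl : dist z l < c / 4 :=
      (dist_le_diam_of_mem (S.isCompact_cyl _).isBounded hz (hω _)).trans_lt
        (hN _ (by rw [wordOf_length]; omega))
    rw [Real.dist_eq, abs_lt] at hzl
    exact ⟨by linarith [hlW.1], by linarith [hlW.2]⟩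
  exact ⟨a, b, (min_le_right _ _).trans hεab, habw.trans hwIcc, hΛ⟩

lemma continuousOn_iterate {B : Set ℝ} (hB : IsPreconnected B) {m : ℕ}
    (horb : ∀ y ∈ B, ∀ j < m, S.f^[j] y ∈ S.domF) :
    ContinuousOn S.f^[m] B := by
  induction m with
  | zero => exact continuousOn_id
  | succ m ih =>
    have hc := ih fun y hy j hj => horb y hy j (by omega)
    obtain ⟨i, hi⟩ := S.exists_subset_g_image_dom (hB.image _ hc)
      (image_subset_iff.2 fun y hy => horb y hy m m.lt_succ_self)
    rw [Function.iterate_succ']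
    exact (S.continuousOn_f i).comp hc fun y hy => hi (mem_image_of_mem _ hy)

/-- The branch `ψ = g_{i₀} ∘ ⋯ ∘ g_{i_{m-1}}` of `f^{-m}` along the orbit of `B`. -/
lemma exists_inverse_branch {B : Set ℝ} (hB : IsPreconnected B) {m : ℕ}
    (horb : ∀ y ∈ B, ∀ j < m, S.f^[j] y ∈ S.domF) :
    ∃ ψ ψ' : ℝ → ℝ, (∀ t ∈ interior S.dom, HasDerivAt ψ (ψ' t) t) ∧
      ∀ y ∈ B, ψ (S.f^[m] y) = y ∧ ψ' (S.f^[m] y) * S.derIter m y = 1 := by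
  induction m with
  | zero => exact ⟨id, 1, fun t _ => hasDerivAt_id t, fun y _ => ⟨rfl, by simp [derIter]⟩⟩
  | succ m ih =>
    have horb' : ∀ y ∈ B, ∀ j < m, S.f^[j] y ∈ S.domF := fun y hy j hj => horb y hy j (by omega)
    obtain ⟨ψ, ψ', hψ, hinv⟩ := ih horb'
    obtain ⟨i, hi⟩ := S.exists_subset_g_image_dom (hB.image _ (S.continuousOn_iterate hB horb'))
      (image_subset_iff.2 fun y hy => horb y hy m m.lt_succ_self)
    refine ⟨ψ ∘ S.g i, fun t => ψ' (S.g i t) * S.gder i t, fun t ht => ?_, fun y hy => ?_⟩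
    · have hgt : S.g i t ∈ interior S.dom :=
        S.g_image_subset_interior_dom i ⟨t, interior_subset ht, rfl⟩
      exact (hψ _ hgt).comp t
        ((S.hg_deriv i t (interior_subset ht)).hasDerivAt (mem_interior_iff_mem_nhds.1 ht))
    obtain ⟨z, hz, hzy⟩ := hi ⟨y, hy, rfl⟩
    have hfz : S.f^[m + 1] y = z := by rw [Function.iterate_succ_apply', ← hzy, S.hf i z hz]
    obtain ⟨hψy, hψ'y⟩ := hinv y hy
    rw [← hzy] at hψy hψ'y
    refine ⟨by rw [hfz, Function.comp_apply, hψy], ?_⟩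
    rw [hfz, derIter, Finset.prod_range_succ, ← derIter, ← hzy, S.hfder i z hz]
    have hne := S.hgder_ne i z hz
    field_simp
    linear_combination hψ'y

lemma image_iterate_subset_interior_dom {B : Set ℝ} (hB : IsPreconnected B) (hBo : IsOpen B)
    {m : ℕ} (hm : m ≠ 0)
    (horb : ∀ y ∈ B, ∀ j < m, S.f^[j] y ∈ S.domF) : S.f^[m] '' B ⊆ interior S.dom := by
  obtain ⟨ψ, _, -, hinv⟩ := S.exists_inverse_branch hB horb
  have hcont := S.continuousOn_iterate hB horb
  have hopen : IsOpen (S.f^[m] '' B) :=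
    hcont.isOpen_image_of_injOn hBo (LeftInvOn.injOn fun y hy => (hinv y hy).1)
  have hdom : S.f^[m] '' B ⊆ S.dom := by
    rintro _ ⟨y, hy, rfl⟩
    obtain ⟨k, rfl⟩ := Nat.exists_eq_succ_of_ne_zero hm
    obtain ⟨i, z, hz, hzy⟩ := mem_iUnion.1 (horb y hy k k.lt_succ_self)
    rw [Function.iterate_succ_apply', ← hzy, S.hf i z hz]
    exact hz
  exact interior_maximal hdom hopen

lemma diam_I_pos : 0 < diam S.I := by
  obtain ⟨a, b, hab, h⟩ := S.hI
  rw [h, Real.diam_Icc hab.le]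
  linarith

lemma exists_Ioo_subset_closedBall_of_hyperbolic_instant (hp : 2 ≤ p) {c₁ c₂ : ℝ}
    (hc₁ : 0 < c₁) (hc₂ : 0 < c₂) : ∃ η > 0, ∀ (x ρ : ℝ) (m : ℕ), 0 < ρ → m ≠ 0 →
      (∀ y ∈ ball x ρ, ∀ j < m, S.f^[j] y ∈ S.domF) → c₁ < diam (S.f^[m] '' ball x ρ) →
      (∀ y ∈ ball x ρ, ∀ z ∈ ball x ρ, |S.derIter m y| / |S.derIter m z| < c₂) →
      ∃ c d, η * (2 * ρ) ≤ d - c ∧ Ioo c d ⊆ closedBall x ρ ∧ Disjoint (Ioo c d) S.limitSet := by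
  obtain ⟨ε, hε, hgap⟩ := S.exists_uniform_Ioo_disjoint_limitSet hp hc₁
  have hL := S.diam_I_pos
  set L := diam S.I
  refine ⟨ε / (4 * c₂ * L), by positivity, fun x ρ m hρ hm horb hdiam hdist => ?_⟩
  have hB := (convex_ball x ρ).isPreconnected
  have hTc := hB.image _ (S.continuousOn_iterate hB horb)
  have hTd := S.image_iterate_subset_interior_dom hB isOpen_ball hm horb
  obtain ⟨ψ, ψ', hψ, hinv⟩ := S.exists_inverse_branch hB horb
  have hK : ∀ s ∈ S.f^[m] '' ball x ρ, ∀ t ∈ S.f^[m] '' ball x ρ, |ψ' s| ≤ c₂ * |ψ' t| := by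
    rintro _ ⟨y, hy, rfl⟩ _ ⟨z, hz, rfl⟩
    have hDy := (hinv y hy).2
    have hDz := (hinv z hz).2
    rw [eq_inv_of_mul_eq_one_left hDy, eq_inv_of_mul_eq_one_left hDz, abs_inv, abs_inv,
      ← div_eq_mul_inv, le_div_iff₀ (abs_pos.2 (right_ne_zero_of_mul_eq_one hDz)), inv_mul_eq_div]
    exact (hdist z hz y hy).le
  have hL' : ∀ s ∈ S.f^[m] '' ball x ρ, ∀ t ∈ S.f^[m] '' ball x ρ, |s - t| ≤ L :=
    fun s hs t ht => dist_le_diam_of_mem S.isCompact_I.isBounded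
      (S.dom_subset_I (interior_subset (hTd hs))) (S.dom_subset_I (interior_subset (hTd ht)))
  obtain ⟨a₀, b₀, hab₀, hIccT⟩ := hTc.exists_Icc_subset_of_lt_diam hc₁.le hdiam
  obtain ⟨a, b, hεab, habI, hΛ⟩ := hgap a₀ b₀ hab₀
  have hu : x - ρ / 2 ∈ ball x ρ := by rw [Real.ball_eq_Ioo]; constructor <;> linarith
  have hv : x + ρ / 2 ∈ ball x ρ := by rw [Real.ball_eq_Ioo]; constructor <;> linarith
  obtain ⟨c, d, hcd, hsub⟩ := exists_Ioo_subset_image_of_bounded_distortion hTc.ordConnected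
    (fun t ht => hψ t (hTd ht)) hK hL' (mem_image_of_mem _ hu) (mem_image_of_mem _ hv)
    (by linarith) (habI.trans hIccT)
  rw [(hinv _ hv).1, (hinv _ hu).1, show x + ρ / 2 - (x - ρ / 2) = ρ by ring, abs_of_pos hρ]
    at hcd
  have himage : ψ '' Ioo a b ⊆ ball x ρ \ S.limitSet := by
    rintro _ ⟨t, ht, rfl⟩
    obtain ⟨y, hy, rfl⟩ := hIccT (habI ht)
    rw [(hinv y hy).1]
    exact ⟨hy, fun hyΛ => hΛ.notMem_of_mem_left ht (S.iterate_mem_limitSet hyΛ m)⟩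
  refine ⟨c, d, ?_, hsub.trans (himage.trans (sdiff_subset.trans ball_subset_closedBall)),
    disjoint_left.2 fun t ht => (himage (hsub ht)).2⟩
  calc ε / (4 * c₂ * L) * (2 * ρ) = ε * ρ / (2 * c₂ * L) := by field_simp; ring
    _ ≤ (b - a) * ρ / (2 * c₂ * L) := by gcongr
    _ ≤ d - c := by rw [div_le_iff₀ (by positivity)]; linarith

lemma frequently_density_le_of_mem_hypSet (hp : 2 ≤ p) {x : ℝ} (hx : x ∈ S.hypSet) :
    ∃ C < 1, ∃ᶠ r in 𝓝[>] 0,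
      volume (S.limitSet ∩ closedBall x r) / volume (closedBall x r) ≤ C := by
  obtain ⟨-, c₁, hc₁, c₂, hc₂, n, hn, r, hr, -, hr0, hk⟩ := hx
  obtain ⟨η, hη, hgap⟩ := S.exists_Ioo_subset_closedBall_of_hyperbolic_instant hp hc₁ hc₂
  refine ⟨ENNReal.ofReal (1 - η), ENNReal.ofReal_lt_one.2 (by linarith),
    (tendsto_nhdsWithin_iff.2 ⟨hr0, .of_forall hr⟩).frequently ?_⟩
  refine ((eventually_ge_atTop 1).mono fun k hk1 => ?_).frequently
  obtain ⟨horb, hdiam, hdist⟩ := hk k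
  obtain ⟨c, d, hcd, hball, hΛ⟩ := hgap x (r k) (n k) (hr k)
    (Nat.one_le_iff_ne_zero.1 (hk1.trans (hn.id_le k))) horb hdiam hdist
  exact volume_inter_closedBall_div_le_of_disjoint_Ioo (hr k) hη.le hball hΛ hcd

lemma limitSet_subsingleton (hp : p < 2) : S.limitSet.Subsingleton := by
  have : Subsingleton (Fin p) := Fin.subsingleton_iff_le_one.2 (by omega)
  rintro x ⟨ω, -, hx⟩ y ⟨ω', -, hy⟩
  rw [Subsingleton.elim ω' ω] at hy
  refine eq_of_forall_dist_le fun ε hε => ?_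
  obtain ⟨N, hN⟩ := S.hgen ε hε
  exact (dist_le_diam_of_mem (S.isCompact_cyl _).isBounded (hx N) (hy N)).trans
    (hN _ (wordOf_length ω N).ge).le

end ExpansiveMarkovSystem

/-- The set `H` has Lebesgue measure zero. -/
theorem hypSet_volume_zero {p : ℕ} (S : ExpansiveMarkovSystem p) :
    MeasureTheory.volume S.hypSet = 0 := by
  rcases lt_or_ge p 2 with hp | hp
  · exact ((S.limitSet_subsingleton hp).anti fun x hx => hx.1).measure_zero volume
  · exact measure_eq_zero_of_frequently_density_le volume (fun x hx => hx.1)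
      fun x hx => S.frequently_density_le_of_mem_hypSet hp hx
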